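/- Let G be a Lie group and let (Γ_n) be a sequence of torsion-free discrete subgroups of G that converges geometrically to a closed subgroup Γ of G. If Γ is discrete, then Γ is torsion-free, i.e. the only element of Γ of finite order is the identity. -/

import Mathlib

/-!
Take `γ ∈ Γ` of order `k` and approximants `γₙ ∈ Γₙ`, so that `γₙ ^ k → 1`. Since `Γ` is
discrete, a small neighbourhood `U` of `1` eventually contains no element of infinite order of
`Γₙ`: the powers of such an element would leave `U` through the compact set `U * U`, and an
accumulation point of these escaping powers would be a nontrivial element of `Γ` close to `1`.
Hence `γₙ ^ k`, and with it `γₙ`, has finite order, so `γₙ = 1` eventually and `γ = 1`.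
-/

open scoped Manifold Topology

open Filter Set Pointwise

theorem ChartedSpace.firstCountableTopology (E M : Type*) [TopologicalSpace E]
    [TopologicalSpace M] [ChartedSpace E M] [FirstCountableTopology E] :
    FirstCountableTopology M where
  nhds_generated_countable x := by
    rw [← (chartAt E x).symm_map_nhds_eq (mem_chart_source E x)]
    infer_instance

theorem exists_pow_mem_mul_diff {M : Type*} [Monoid M] {U : Set M} {δ : M} (h1U : 1 ∈ U)
    (hδU : δ ∈ U) (hescape : ∃ m : ℕ, δ ^ m ∉ U) : ∃ m : ℕ, δ ^ m ∈ (U * U) \ U := by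
  by_contra! hstay
  obtain ⟨m, hm⟩ := hescape
  have hall : ∀ n : ℕ, δ ^ n ∈ U := fun n => by
    induction n with
    | zero => rwa [pow_zero]
    | succ n ih =>
      by_contra hnU
      exact hstay (n + 1) ⟨pow_succ δ n ▸ Set.mul_mem_mul ih hδU, hnU⟩
  exact hm (hall m)

theorem nonempty_inter_of_frequently_nonempty_inter {X : Type*} [TopologicalSpace X]
    [FirstCountableTopology X] {S : ℕ → Set X} {T : Set X}
    (hacc : ∀ nk : ℕ → ℕ, StrictMono nk → ∀ xk : ℕ → X, (∀ j, xk j ∈ S (nk j)) → ∀ x : X,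
      Tendsto xk atTop (𝓝 x) → x ∈ T)
    {C : Set X} (hC : IsCompact C) (hfreq : ∃ᶠ n in atTop, (S n ∩ C).Nonempty) :
    (T ∩ C).Nonempty := by
  obtain ⟨φ, hφ, hφC⟩ := extraction_of_frequently_atTop hfreq
  choose x hxS hxC using hφC
  obtain ⟨y, hyC, ψ, hψ, hlim⟩ := hC.tendsto_subseq hxC
  exact ⟨y, hacc (φ ∘ ψ) (hφ.comp hψ) (x ∘ ψ) (fun j => hxS (ψ j)) y hlim, hyC⟩

section DiscreteSubgroup

variable {G : Type*} [Group G] [TopologicalSpace G] [IsTopologicalGroup G] [T2Space G]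

theorem Subgroup.finite_inter_of_isCompact (H : Subgroup G) [DiscreteTopology H] {K : Set G}
    (hK : IsCompact K) : ((H : Set G) ∩ K).Finite :=
  (hK.inter_left Subgroup.isClosed_of_discrete).finite
    ((isDiscrete_iff_discreteTopology.mpr ‹_›).mono inter_subset_left)

theorem Subgroup.exists_pow_notMem_of_isCompact {H : Subgroup G} [DiscreteTopology H] {δ : G}
    (hδ : δ ∈ H) (hinf : ¬IsOfFinOrder δ) {K : Set G} (hK : IsCompact K) :
    ∃ m : ℕ, δ ^ m ∉ K := by
  by_contra! hall
  exact (H.finite_inter_of_isCompact hK).not_infinite <|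
    infinite_of_injective_forall_mem (injective_pow_iff_not_isOfFinOrder.mpr hinf)
      fun m => ⟨H.pow_mem hδ m, hall m⟩

theorem exists_mem_nhds_one_eventually_isOfFinOrder [LocallyCompactSpace G]
    [FirstCountableTopology G] {Γseq : ℕ → Subgroup G} (hdisc : ∀ n, DiscreteTopology (Γseq n))
    {Γ : Subgroup G} [DiscreteTopology Γ]
    (hacc : ∀ nk : ℕ → ℕ, StrictMono nk → ∀ γk : ℕ → G, (∀ j, γk j ∈ Γseq (nk j)) → ∀ γ : G,
      Tendsto γk atTop (𝓝 γ) → γ ∈ Γ) :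
    ∃ U ∈ 𝓝 (1 : G), ∀ᶠ n in atTop, ∀ δ ∈ Γseq n, δ ∈ U → IsOfFinOrder δ := by
  obtain ⟨V, hV, hVΓ⟩ := nhds_inter_eq_singleton_of_mem_discrete
    (isDiscrete_iff_discreteTopology.mpr ‹DiscreteTopology Γ›) Γ.one_mem
  obtain ⟨K, hK, hKV, hKcompact⟩ := local_compact_nhds hV
  obtain ⟨U, hUopen, h1U, hUUK⟩ := exists_open_nhds_one_mul_subset hK
  have hUK : U ⊆ K := (subset_mul_left U h1U).trans hUUK
  refine ⟨U, hUopen.mem_nhds h1U, ?_⟩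
  by_contra hinf
  have hmeet : ∃ᶠ n in atTop, ((Γseq n : Set G) ∩ (K \ U)).Nonempty := by
    refine (not_eventually.mp hinf).mono fun n hn => ?_
    push Not at hn
    obtain ⟨δ, hδ, hδU, hδinf⟩ := hn
    have := hdisc n
    obtain ⟨m, hmUU, hmU⟩ := exists_pow_mem_mul_diff h1U hδU <|
      (Subgroup.exists_pow_notMem_of_isCompact hδ hδinf hKcompact).imp fun _ hK hU => hK (hUK hU)
    exact ⟨δ ^ m, (Γseq n).pow_mem hδ m, hUUK hmUU, hmU⟩
  obtain ⟨η, hηΓ, hηK, hηU⟩ :=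
    nonempty_inter_of_frequently_nonempty_inter hacc (hKcompact.diff hUopen) hmeet
  have hη : η ∈ V ∩ Γ := ⟨hKV hηK, hηΓ⟩
  rw [hVΓ, mem_singleton_iff] at hη
  exact hηU (hη ▸ h1U)

end DiscreteSubgroup

theorem geometric_limit_of_torsion_free_is_torsion_free_general
    {E : Type*} [NormedAddCommGroup E] [NormedSpace ℝ E] [FiniteDimensional ℝ E]
    {G : Type*} [TopologicalSpace G] [ChartedSpace E G] [Group G]
    [IsTopologicalGroup G]
    (Γseq : ℕ → Subgroup G)
    (hdisc : ∀ n, DiscreteTopology (Γseq n))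
    (htf : ∀ n, ∀ γ ∈ Γseq n, IsOfFinOrder γ → γ = 1)
    (Γ : Subgroup G)
    -- geometric convergence, condition (1)
    (hgeo₁ : ∀ nk : ℕ → ℕ, StrictMono nk → ∀ γk : ℕ → G,
      (∀ j, γk j ∈ Γseq (nk j)) → ∀ γ : G,
      Filter.Tendsto γk Filter.atTop (𝓝 γ) → γ ∈ Γ)
    -- geometric convergence, condition (2)
    (hgeo₂ : ∀ γ ∈ Γ, ∃ γs : ℕ → G, (∀ n, γs n ∈ Γseq n) ∧
      Filter.Tendsto γs Filter.atTop (𝓝 γ))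
    (hΓdisc : DiscreteTopology ↥Γ) :
    ∀ γ ∈ Γ, IsOfFinOrder γ → γ = 1 := by
  have : T1Space G := ChartedSpace.t1Space E G
  have : LocallyCompactSpace G := ChartedSpace.locallyCompactSpace E G
  have : FirstCountableTopology G := ChartedSpace.firstCountableTopology E G
  intro γ hγ hfin
  obtain ⟨U, hU, hfinU⟩ := exists_mem_nhds_one_eventually_isOfFinOrder hdisc hgeo₁
  obtain ⟨γs, hγs, hlim⟩ := hgeo₂ γ hγ
  have hpow : Tendsto (fun n => γs n ^ orderOf γ) atTop (𝓝 1) := by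
    simpa only [pow_orderOf_eq_one] using hlim.pow (orderOf γ)
  have htrivial : ∀ᶠ n in atTop, γs n = 1 := (hfinU.and (hpow hU)).mono fun n ⟨hn, hnU⟩ =>
    htf n _ (hγs n) ((hn _ ((Γseq n).pow_mem (hγs n) _) hnU).of_pow hfin.orderOf_pos.ne')
  exact tendsto_nhds_unique hlim (tendsto_const_nhds.congr' (htrivial.mono fun _ h => h.symm))

theorem geometric_limit_of_torsion_free_is_torsion_free
    {E : Type*} [NormedAddCommGroup E] [NormedSpace ℝ E] [FiniteDimensional ℝ E]
    {G : Type*} [TopologicalSpace G] [ChartedSpace E G] [Group G]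
    [IsTopologicalGroup G] [LieGroup 𝓘(ℝ, E) (⊤ : ℕ∞) G]
    (Γseq : ℕ → Subgroup G)
    (hdisc : ∀ n, DiscreteTopology (Γseq n))
    (htf : ∀ n, ∀ γ ∈ Γseq n, IsOfFinOrder γ → γ = 1)
    (Γ : Subgroup G) (hclosed : IsClosed (Γ : Set G))
    -- geometric convergence, condition (1)
    (hgeo₁ : ∀ nk : ℕ → ℕ, StrictMono nk → ∀ γk : ℕ → G,
      (∀ j, γk j ∈ Γseq (nk j)) → ∀ γ : G,
      Filter.Tendsto γk Filter.atTop (𝓝 γ) → γ ∈ Γ)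
    -- geometric convergence, condition (2)
    (hgeo₂ : ∀ γ ∈ Γ, ∃ γs : ℕ → G, (∀ n, γs n ∈ Γseq n) ∧
      Filter.Tendsto γs Filter.atTop (𝓝 γ))
    (hΓdisc : DiscreteTopology ↥Γ) :
    ∀ γ ∈ Γ, IsOfFinOrder γ → γ = 1 :=
  geometric_limit_of_torsion_free_is_torsion_free_general (E := E) Γseq hdisc htf Γ hgeo₁ hgeo₂
    hΓdisc
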